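/- Let σ be a weight function satisfying σ(t) = o(t) as t → ∞ which is equivalent to a concave weight function. Then there is a constant H ≥ 1 such that h_{\underline{s}^ξ}(t) ≤ (h_{\underline{s}^{2ξ}}(Ht))² for all ξ > 0 and all t > 0. -/

import Mathlib

open Real Filter MeasureTheory Asymptotics
open scoped BigOperators Topology NNReal ENNReal

noncomputable section

/-- `ω` is a weight function: continuous, increasing on `[0,∞)`, `ω(0)=0`, `ω(t)→∞`,
`ω(2t)=O(ω(t))`, `log t = o(ω(t))`, and `φ_ω = ω ∘ exp` is convex on `[0,∞)`. -/
structure IsWeightFunction (ω : ℝ → ℝ) : Prop where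
  continuousOn : ContinuousOn ω (Set.Ici 0)
  monotoneOn : MonotoneOn ω (Set.Ici 0)
  map_zero : ω 0 = 0
  nonneg : ∀ t : ℝ, 0 ≤ t → 0 ≤ ω t
  tendsto_atTop : Tendsto ω atTop atTop
  isBigO_two_mul : (fun t => ω (2 * t)) =O[atTop] ω
  log_isLittleO : Real.log =o[atTop] ω
  convexOn_comp_exp : ConvexOn ℝ (Set.Ici 0) (fun x => ω (Real.exp x))

/-- Equivalence of weight functions: each is `O` of the other at `∞`. -/
def WeightEquiv (ω σ : ℝ → ℝ) : Prop :=
  ω =O[atTop] σ ∧ σ =O[atTop] ω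

/-- `ω` is non-quasianalytic: `∫_1^∞ ω(t)/t² dt < ∞`. -/
def NonQuasianalytic (ω : ℝ → ℝ) : Prop :=
  IntegrableOn (fun t : ℝ => ω t / t ^ 2) (Set.Ici 1)

/-- Young conjugate `φ_ω*(y) = sup_{x ≥ 0} (x y − ω(exp x))`. -/
def youngConj (ω : ℝ → ℝ) (y : ℝ) : ℝ :=
  ⨆ x : Set.Ici (0 : ℝ), ((x : ℝ) * y - ω (Real.exp (x : ℝ)))

/-- `S_k^ξ = exp((1/ξ) φ_σ*(ξ k))`. -/
def assocSBig (σ : ℝ → ℝ) (ξ : ℝ) (k : ℕ) : ℝ :=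
  Real.exp ((1 / ξ) * youngConj σ (ξ * k))

/-- `s_k^ξ = S_k^ξ / k!`. -/
def assocS (σ : ℝ → ℝ) (ξ : ℝ) (k : ℕ) : ℝ :=
  assocSBig σ ξ k / (Nat.factorial k : ℝ)

/-- `ω_m(t) = sup_k log(t^k / m_k)` for `t > 0`. -/
def omegaM (m : ℕ → ℝ) (t : ℝ) : ℝ := ⨆ k : ℕ, Real.log (t ^ k / m k)

/-- The log-convex minorant `\underline{m}_k = sup_{t>0} t^k / exp(ω_m(t))`. -/
def lcMinorant (m : ℕ → ℝ) (k : ℕ) : ℝ :=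
  ⨆ t : Set.Ioi (0 : ℝ), (t : ℝ) ^ k / Real.exp (omegaM m (t : ℝ))

/-- `h_m(t) = inf_k m_k t^k` (for `t > 0`). -/
def hFun (m : ℕ → ℝ) (t : ℝ) : ℝ := ⨅ k : ℕ, m k * t ^ k

/-- `Γ_m(t) = min{k : m_{k+1}/m_k ≥ 1/t}`. -/
def GammaIdx (m : ℕ → ℝ) (t : ℝ) : ℕ := sInf {k : ℕ | 1 / t ≤ m (k + 1) / m k}

/-- Infimal convolution of a sequence with itself: `v_k = min_{0 ≤ j ≤ k} s_j s_{k-j}`. -/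
def infConv (s : ℕ → ℝ) (k : ℕ) : ℝ :=
  (Finset.range (k + 1)).inf' Finset.nonempty_range_add_one (fun j => s j * s (k - j))

/- Multi-index machinery. -/

/-- `|α| = ∑ α_i`. -/
def mSum {n : ℕ} (α : Fin n → ℕ) : ℕ := ∑ i, α i

/-- `α! = ∏ (α_i)!`. -/
def mFact {n : ℕ} (α : Fin n → ℕ) : ℕ := ∏ i, Nat.factorial (α i)

/-- `x^α = ∏ x_i^{α_i}`. -/
def mPow {n : ℕ} (x : Fin n → ℝ) (α : Fin n → ℕ) : ℝ := ∏ i, x i ^ α i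

/-- The finite set of multi-indices `β` with `|β| ≤ m`. -/
def mIdxLe (n m : ℕ) : Finset (Fin n → ℕ) :=
  (Fintype.piFinset fun _ => Finset.range (m + 1)).filter fun β => mSum β ≤ m

/-- First-order partial derivative in the `i`-th coordinate direction. -/
def pderivI {n : ℕ} (i : Fin n) (f : (Fin n → ℝ) → ℝ) : (Fin n → ℝ) → ℝ :=
  fun x => fderiv ℝ f x (Pi.single i 1)

/-- Iterated partial derivative `∂^α f`. -/
def mDeriv {n : ℕ} (α : Fin n → ℕ) (f : (Fin n → ℝ) → ℝ) : (Fin n → ℝ) → ℝ :=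
  (List.finRange n).foldr (fun i g => (pderivI i)^[α i] g) f

/-- Taylor polynomial of degree `p` of a jet `F` at `a`:
`T_a^p F(y) = ∑_{|β| ≤ p} F^β(a) (y-a)^β / β!`. -/
def jetTaylor {n : ℕ} (F : (Fin n → ℕ) → (Fin n → ℝ) → ℝ) (p : ℕ) (a : Fin n → ℝ) :
    (Fin n → ℝ) → ℝ :=
  fun y => ∑ β ∈ mIdxLe n p, F β a * mPow (y - a) β / (mFact β : ℝ)

/-- Whitney remainder `(R_a^k F)^α(b) = F^α(b) − ∑_{|β| ≤ k−|α|} F^{α+β}(a)(b-a)^β/β!`. -/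
def jetRem {n : ℕ} (F : (Fin n → ℕ) → (Fin n → ℝ) → ℝ) (k : ℕ) (α : Fin n → ℕ)
    (a b : Fin n → ℝ) : ℝ :=
  F α b - ∑ β ∈ mIdxLe n (k - mSum α), F (α + β) a * mPow (b - a) β / (mFact β : ℝ)

/-- A jet on `E`: a family of functions continuous on `E`. -/
def IsJet {n : ℕ} (E : Set (Fin n → ℝ)) (F : (Fin n → ℕ) → (Fin n → ℝ) → ℝ) : Prop :=
  ∀ α : Fin n → ℕ, ContinuousOn (F α) E

/-- Whitney ultrajet of Roumieu class `B^{σ}` (weight function `σ`) on `E`. -/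
def IsWhitneyUltrajetW {n : ℕ} (σ : ℝ → ℝ) (E : Set (Fin n → ℝ))
    (F : (Fin n → ℕ) → (Fin n → ℝ) → ℝ) : Prop :=
  IsJet E F ∧ ∃ ξ : ℝ, 0 < ξ ∧ ∃ C : ℝ, 0 < C ∧ ∃ ρ : ℝ, 1 ≤ ρ ∧
    (∀ α : Fin n → ℕ, ∀ a ∈ E,
      |F α a| ≤ C * ρ ^ (mSum α) * Real.exp ((1 / ξ) * youngConj σ (ξ * (mSum α : ℝ)))) ∧
    (∀ k : ℕ, ∀ α : Fin n → ℕ, mSum α ≤ k → ∀ a ∈ E, ∀ b ∈ E,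
      |jetRem F k α a b| ≤ C * ρ ^ (k + 1) *
        ((Nat.factorial (mSum α) : ℝ) / (Nat.factorial (k + 1) : ℝ)) *
        Real.exp ((1 / ξ) * youngConj σ (ξ * ((k : ℝ) + 1))) *
        ‖b - a‖ ^ (k + 1 - mSum α))

/-- Global Roumieu class `B^{ω}(U)` for a weight function `ω`. -/
def MemRoumieuW {n : ℕ} (ω : ℝ → ℝ) (U : Set (Fin n → ℝ)) (f : (Fin n → ℝ) → ℝ) : Prop :=
  ContDiffOn ℝ (⊤ : ℕ∞) f U ∧ ∃ C : ℝ, 0 < C ∧ ∃ ρ : ℝ, 0 < ρ ∧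
    ∀ α : Fin n → ℕ, ∀ x ∈ U,
      |mDeriv α f x| ≤ C * Real.exp ((1 / ρ) * youngConj ω (ρ * (mSum α : ℝ)))

/-- Global Beurling class `B^{(ω)}(U)` for a weight function `ω`. -/
def MemBeurlingW {n : ℕ} (ω : ℝ → ℝ) (U : Set (Fin n → ℝ)) (f : (Fin n → ℝ) → ℝ) : Prop :=
  ContDiffOn ℝ (⊤ : ℕ∞) f U ∧ ∀ ρ : ℝ, 0 < ρ → ∃ C : ℝ, 0 < C ∧
    ∀ α : Fin n → ℕ, ∀ x ∈ U,
      |mDeriv α f x| ≤ C * Real.exp ((1 / ρ) * youngConj ω (ρ * (mSum α : ℝ)))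

/-- Global Roumieu class `B^{M}(U)` for a weight sequence `M`. -/
def MemRoumieuM {n : ℕ} (M : ℕ → ℝ) (U : Set (Fin n → ℝ)) (f : (Fin n → ℝ) → ℝ) : Prop :=
  ContDiffOn ℝ (⊤ : ℕ∞) f U ∧ ∃ C : ℝ, 0 < C ∧ ∃ ρ : ℝ, 0 < ρ ∧
    ∀ α : Fin n → ℕ, ∀ x ∈ U, |mDeriv α f x| ≤ C * ρ ^ (mSum α) * M (mSum α)

/-- Global Beurling class `B^{(M)}(U)` for a weight sequence `M`. -/
def MemBeurlingM {n : ℕ} (M : ℕ → ℝ) (U : Set (Fin n → ℝ)) (f : (Fin n → ℝ) → ℝ) : Prop :=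
  ContDiffOn ℝ (⊤ : ℕ∞) f U ∧ ∀ ρ : ℝ, 0 < ρ → ∃ C : ℝ, 0 < C ∧
    ∀ α : Fin n → ℕ, ∀ x ∈ U, |mDeriv α f x| ≤ C * ρ ^ (mSum α) * M (mSum α)

/-- Roumieu class of a weight matrix: union over the matrix. -/
def MemRoumieuMx {n : ℕ} (𝔐 : Set (ℕ → ℝ)) (U : Set (Fin n → ℝ))
    (f : (Fin n → ℝ) → ℝ) : Prop :=
  ∃ M ∈ 𝔐, MemRoumieuM M U f

/-- Beurling class of a weight matrix: intersection over the matrix. -/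
def MemBeurlingMx {n : ℕ} (𝔐 : Set (ℕ → ℝ)) (U : Set (Fin n → ℝ))
    (f : (Fin n → ℝ) → ℝ) : Prop :=
  ∀ M ∈ 𝔐, MemBeurlingM M U f

/-- A weight sequence: `M_0 = 1`, log-convex, `M_k ≥ k!`, `M_k^{1/k} → ∞`. -/
structure IsWeightSeq (M : ℕ → ℝ) : Prop where
  map_zero : M 0 = 1
  logConvex : ∀ k : ℕ, 1 ≤ k → M k ^ 2 ≤ M (k - 1) * M (k + 1)
  factorial_le : ∀ k : ℕ, (Nat.factorial k : ℝ) ≤ M k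
  root_tendsto : Tendsto (fun k : ℕ => M k ^ ((k : ℝ)⁻¹)) atTop atTop

/-- `M` is strongly log-convex: `(M_k/k!)` is log-convex. -/
def StronglyLogConvex (M : ℕ → ℝ) : Prop :=
  ∀ k : ℕ, 1 ≤ k → (M k / (Nat.factorial k : ℝ)) ^ 2 ≤
    (M (k - 1) / (Nat.factorial (k - 1) : ℝ)) * (M (k + 1) / (Nat.factorial (k + 1) : ℝ))

/-- A weight matrix: a nonempty family of weight sequences, totally ordered pointwise. -/
def IsWeightMatrix (𝔐 : Set (ℕ → ℝ)) : Prop :=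
  𝔐.Nonempty ∧ (∀ M ∈ 𝔐, IsWeightSeq M) ∧
    ∀ M ∈ 𝔐, ∀ N ∈ 𝔐, (∀ k, M k ≤ N k) ∨ (∀ k, N k ≤ M k)

section AuxProp3

variable {σ : ℝ → ℝ}

lemma aux_youngConj_bddAbove (hσ : IsWeightFunction σ) {y : ℝ} (hy : 0 ≤ y) :
    BddAbove (Set.range fun x : Set.Ici (0:ℝ) => (x : ℝ) * y - σ (Real.exp (x : ℝ))) := by
  obtain ⟨T, hT⟩ :=
    Filter.eventually_atTop.mp (hσ.log_isLittleO.def (c := 1/(y+1)) (by positivity))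
  refine ⟨y * Real.log (max T 1), ?_⟩
  rintro _ ⟨⟨x, hx⟩, rfl⟩
  simp only [Set.mem_Ici] at hx
  dsimp only
  have hlogM : 0 ≤ Real.log (max T 1) := Real.log_nonneg (le_max_right T 1)
  have hσx : 0 ≤ σ (Real.exp x) := hσ.nonneg _ (Real.exp_pos x).le
  by_cases hc : max T 1 ≤ Real.exp x
  · have h1 := hT (Real.exp x) (le_trans (le_max_left T 1) hc)
    rw [Real.log_exp, Real.norm_of_nonneg hx, Real.norm_of_nonneg hσx] at h1
    have hy1 : (0:ℝ) < y + 1 := by positivity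
    have h2 : x * (y + 1) ≤ σ (Real.exp x) := by
      rw [div_mul_eq_mul_div, one_mul] at h1
      exact (le_div_iff₀ hy1).mp h1
    nlinarith [mul_nonneg hy hlogM]
  · push_neg at hc
    have hx' : x < Real.log (max T 1) := by
      rw [← Real.log_exp x]
      exact Real.log_lt_log (Real.exp_pos x) hc
    nlinarith [mul_le_mul_of_nonneg_left hx'.le hy]

lemma aux_phi_lb (hσ : IsWeightFunction σ) {y : ℝ} (hy : 0 ≤ y) :
    -σ 1 ≤ youngConj σ y := by
  have h := le_ciSup (aux_youngConj_bddAbove hσ hy) (⟨0, Set.mem_Ici.mpr le_rfl⟩ : Set.Ici (0:ℝ))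
  rw [youngConj]
  simpa using h

lemma aux_assocS_pos (σ : ℝ → ℝ) (ξ : ℝ) (k : ℕ) : 0 < assocS σ ξ k := by
  have : (0:ℝ) < (k.factorial : ℝ) := by exact_mod_cast k.factorial_pos
  exact div_pos (Real.exp_pos _) this

lemma aux_log_assocS (σ : ℝ → ℝ) (ξ t : ℝ) (ht : 0 < t) (n : ℕ) :
    Real.log (t ^ n / assocS σ ξ n) =
      n * Real.log t + Real.log (n.factorial : ℝ) - (1/ξ) * youngConj σ (ξ * n) := by
  have hf : ((n.factorial : ℝ)) ≠ 0 := by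
    have : (0:ℝ) < (n.factorial : ℝ) := by exact_mod_cast n.factorial_pos
    exact this.ne'
  rw [assocS, assocSBig, div_div_eq_mul_div,
    Real.log_div (by positivity) (Real.exp_ne_zero _), Real.log_exp,
    Real.log_mul (by positivity) hf, Real.log_pow]

lemma aux_sigma_lin (hσ : IsWeightFunction σ)
    (hσo : σ =o[Filter.atTop] (fun t : ℝ => t)) {ε : ℝ} (hε : 0 < ε) :
    ∃ D : ℝ, 0 ≤ D ∧ ∀ u : ℝ, 0 ≤ u → σ u ≤ ε * u + D := by
  obtain ⟨T, hT⟩ := Filter.eventually_atTop.mp (hσo.def hε)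
  have hM0 : (0:ℝ) ≤ max T 1 := le_trans zero_le_one (le_max_right T 1)
  refine ⟨σ (max T 1), hσ.nonneg _ hM0, fun u hu => ?_⟩
  by_cases hc : max T 1 ≤ u
  · have h1 := hT u (le_trans (le_max_left T 1) hc)
    have h0 : 0 < u := lt_of_lt_of_le (lt_of_lt_of_le zero_lt_one (le_max_right T 1)) hc
    rw [Real.norm_of_nonneg (hσ.nonneg u hu), Real.norm_of_nonneg h0.le] at h1
    have h2 : 0 ≤ σ (max T 1) := hσ.nonneg _ hM0
    linarith
  · push_neg at hc
    have h1 := hσ.monotoneOn (Set.mem_Ici.mpr hu) (Set.mem_Ici.mpr hM0) hc.le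
    nlinarith [mul_nonneg hε.le hu]

lemma aux_omega_bdd (hσ : IsWeightFunction σ)
    (hσo : σ =o[Filter.atTop] (fun t : ℝ => t)) {ξ t : ℝ} (hξ : 0 < ξ) (ht : 0 < t) :
    BddAbove (Set.range fun n : ℕ => Real.log (t ^ n / assocS σ ξ n)) := by
  have hε : 0 < ξ / (2 * Real.exp 1 * t) := by positivity
  obtain ⟨D, hD, hlin⟩ := aux_sigma_lin hσ hσo hε
  have hσ1 : 0 ≤ σ 1 := hσ.nonneg 1 zero_le_one
  have hDξ : 0 ≤ D / ξ := div_nonneg hD hξ.le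
  have hσ1ξ : 0 ≤ σ 1 / ξ := div_nonneg hσ1 hξ.le
  refine ⟨D/ξ + σ 1/ξ, ?_⟩
  rintro _ ⟨n, rfl⟩
  dsimp only
  rw [aux_log_assocS σ ξ t ht n]
  rcases Nat.eq_zero_or_pos n with hn | hn
  · subst hn
    have hφ := aux_phi_lb hσ (le_refl (0:ℝ))
    have hmul := mul_le_mul_of_nonneg_left hφ (by positivity : (0:ℝ) ≤ 1/ξ)
    have heq : (1/ξ) * (-σ 1) = -(σ 1 / ξ) := by ring
    simp only [Nat.cast_zero, zero_mul, Nat.factorial_zero, Nat.cast_one, Real.log_one,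
      mul_zero]
    linarith
  · have hn1 : (1:ℝ) ≤ (n:ℝ) := by exact_mod_cast hn
    have hnR : (0:ℝ) < (n:ℝ) := lt_of_lt_of_le zero_lt_one hn1
    have hfact : Real.log (n.factorial : ℝ) ≤ n * Real.log n := by
      have h1 : ((n.factorial : ℝ)) ≤ ((n:ℝ))^n := by exact_mod_cast Nat.factorial_le_pow n
      have h2 := Real.log_le_log (by exact_mod_cast n.factorial_pos) h1
      rwa [Real.log_pow] at h2
    set u := Real.exp 1 * t * n with hu_def
    have hu0 : 0 < u := by positivity
    by_cases hu1 : 1 ≤ u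
    · have hx0 : 0 ≤ Real.log u := Real.log_nonneg hu1
      have hφ : Real.log u * (ξ * (n:ℝ)) - σ u ≤ youngConj σ (ξ * (n:ℝ)) := by
        have h := le_ciSup (aux_youngConj_bddAbove hσ (by positivity : (0:ℝ) ≤ ξ * n))
          (⟨Real.log u, Set.mem_Ici.mpr hx0⟩ : Set.Ici (0:ℝ))
        rw [youngConj]
        simpa [Real.exp_log hu0] using h
      have hσu := hlin u hu0.le
      have hεu : ξ / (2 * Real.exp 1 * t) * u = ξ * n / 2 := by
        rw [hu_def]; field_simp
      rw [hεu] at hσu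
      have hσuξ : σ u / ξ ≤ (n:ℝ)/2 + D/ξ := by
        rw [div_le_iff₀ hξ]
        have : ((n:ℝ)/2 + D/ξ) * ξ = ξ * n / 2 + D := by field_simp
        rw [this]; exact hσu
      have hdiv := mul_le_mul_of_nonneg_left hφ (by positivity : (0:ℝ) ≤ 1/ξ)
      have hexp : (1/ξ) * (Real.log u * (ξ * (n:ℝ)) - σ u)
          = (n:ℝ) * Real.log u - σ u / ξ := by field_simp
      rw [hexp] at hdiv
      have hlogu : Real.log u = 1 + Real.log t + Real.log n := by
        rw [hu_def, Real.log_mul (by positivity) hnR.ne',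
          Real.log_mul (Real.exp_ne_zero 1) ht.ne', Real.log_exp]
      have hnlogu : (n:ℝ) * Real.log u = n + n * Real.log t + n * Real.log n := by
        rw [hlogu]; ring
      rw [hnlogu] at hdiv
      linarith
    · push_neg at hu1
      have hφ := aux_phi_lb hσ (by positivity : (0:ℝ) ≤ ξ * n)
      have hmul := mul_le_mul_of_nonneg_left hφ (by positivity : (0:ℝ) ≤ 1/ξ)
      have heq : (1/ξ) * (-σ 1) = -(σ 1 / ξ) := by ring
      have he1 : (1:ℝ) ≤ Real.exp 1 := Real.one_le_exp zero_le_one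
      have htn : t * (n:ℝ) < 1 := by nlinarith [mul_pos ht hnR]
      have hlogtn : Real.log (t * n) ≤ 0 := Real.log_nonpos (by positivity) htn.le
      have hnl : (n:ℝ) * Real.log (t * n) ≤ 0 :=
        mul_nonpos_of_nonneg_of_nonpos hnR.le hlogtn
      have hsplit : (n:ℝ) * Real.log (t * n) = n * Real.log t + n * Real.log n := by
        rw [Real.log_mul ht.ne' hnR.ne']; ring
      linarith

end AuxProp3

/-- Proposition 3: the inequality `h_{\underline{s}^ξ}(t) ≤ h_{\underline{s}^{2ξ}}(Ht)²`. -/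
theorem prop3_hfun (σ : ℝ → ℝ) (hσ : IsWeightFunction σ)
    (hσo : σ =o[atTop] (fun t : ℝ => t))
    (hconc : ∃ τ : ℝ → ℝ, IsWeightFunction τ ∧ ConcaveOn ℝ (Set.Ici 0) τ ∧ WeightEquiv σ τ) :
    ∃ H : ℝ, 1 ≤ H ∧ ∀ ξ : ℝ, 0 < ξ → ∀ t : ℝ, 0 < t →
      hFun (lcMinorant (assocS σ ξ)) t ≤
        (hFun (lcMinorant (assocS σ (2 * ξ))) (H * t)) ^ 2 := by
  classical
  refine ⟨1, le_rfl, fun ξ hξ t ht => ?_⟩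
  rw [one_mul]
  haveI : Nonempty (Set.Ioi (0:ℝ)) := ⟨⟨1, Set.mem_Ioi.mpr zero_lt_one⟩⟩
  set m₁ := assocS σ ξ with hm₁def
  set m₂ := assocS σ (2*ξ) with hm₂def
  have h2ξ : 0 < 2*ξ := by linarith
  have hm1pos : ∀ n, 0 < m₁ n := fun n => aux_assocS_pos σ ξ n
  have hm2pos : ∀ n, 0 < m₂ n := fun n => aux_assocS_pos σ (2*ξ) n
  -- key sequence inequality : m₁ (2k) ≤ (m₂ k)^2
  have hkey : ∀ k : ℕ, m₁ (2*k) ≤ m₂ k ^ 2 := by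
    intro k
    have hfac : ((k.factorial : ℝ))^2 ≤ (((2*k).factorial : ℝ)) := by
      have h := Nat.le_of_dvd (Nat.factorial_pos (k+k))
        (Nat.factorial_mul_factorial_dvd_factorial_add k k)
      rw [sq, two_mul]
      exact_mod_cast h
    rw [hm₁def, hm₂def, assocS, assocS, assocSBig, assocSBig, div_pow, ← Real.exp_nat_mul]
    have hc : ((2:ℕ):ℝ) * (1/(2*ξ) * youngConj σ (2*ξ*(k:ℝ)))
        = 1/ξ * youngConj σ (ξ * ((2*k : ℕ):ℝ)) := by
      have harg : ξ * ((2*k : ℕ):ℝ) = 2*ξ*(k:ℝ) := by push_cast; ring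
      rw [harg]
      push_cast
      field_simp
    rw [hc]
    have hkpos : (0:ℝ) < ((k.factorial : ℝ))^2 := by
      have : (0:ℝ) < (k.factorial : ℝ) := by exact_mod_cast k.factorial_pos
      positivity
    exact div_le_div_of_nonneg_left (Real.exp_pos _).le hkpos hfac
  -- boundedness of the omegaM families
  have hbdd₁ : ∀ s : ℝ, 0 < s →
      BddAbove (Set.range fun n : ℕ => Real.log (s ^ n / m₁ n)) :=
    fun s hs => aux_omega_bdd hσ hσo hξ hs
  have hbdd₂ : ∀ s : ℝ, 0 < s →
      BddAbove (Set.range fun n : ℕ => Real.log (s ^ n / m₂ n)) :=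
    fun s hs => aux_omega_bdd hσ hσo h2ξ hs
  -- 2 ω₂ ≤ ω₁
  have homega : ∀ s : ℝ, 0 < s → 2 * omegaM m₂ s ≤ omegaM m₁ s := by
    intro s hs
    have h : omegaM m₂ s ≤ omegaM m₁ s / 2 := by
      rw [omegaM]
      apply ciSup_le
      intro n
      have hsq : s^(2*n) / m₂ n ^ 2 = (s^n / m₂ n)^2 := by
        rw [div_pow, ← pow_mul, mul_comm n 2]
      have h1 : Real.log (s^(2*n) / m₂ n ^ 2) = 2 * Real.log (s^n / m₂ n) := by
        rw [hsq, Real.log_pow]; norm_num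
      have h2 : Real.log (s^(2*n) / m₂ n ^ 2) ≤ Real.log (s^(2*n) / m₁ (2*n)) := by
        apply Real.log_le_log (div_pos (pow_pos hs _) (pow_pos (hm2pos n) 2))
        exact div_le_div_of_nonneg_left (pow_nonneg hs.le _) (hm1pos (2*n)) (hkey n)
      have h3 : Real.log (s^(2*n) / m₁ (2*n)) ≤ omegaM m₁ s := by
        rw [omegaM]; exact le_ciSup (hbdd₁ s hs) (2*n)
      linarith
    linarith
  -- the lcMinorant m₂ family is bounded above
  have hm2bd : ∀ (k : ℕ) (u : ℝ), 0 < u → u^k / Real.exp (omegaM m₂ u) ≤ m₂ k := by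
    intro k u hu
    have h1 : Real.log (u^k / m₂ k) ≤ omegaM m₂ u := by
      rw [omegaM]; exact le_ciSup (hbdd₂ u hu) k
    have hpos : 0 < u^k / m₂ k := div_pos (pow_pos hu k) (hm2pos k)
    have h2 : u^k / m₂ k ≤ Real.exp (omegaM m₂ u) := by
      calc u^k / m₂ k = Real.exp (Real.log (u^k / m₂ k)) := (Real.exp_log hpos).symm
      _ ≤ _ := Real.exp_le_exp.mpr h1
    rw [div_le_iff₀ (Real.exp_pos _)]
    rw [div_le_iff₀ (hm2pos k)] at h2
    exact h2.trans_eq (mul_comm _ _)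
  have hBdd2' : ∀ k : ℕ,
      BddAbove (Set.range fun u : Set.Ioi (0:ℝ) => (u:ℝ)^k / Real.exp (omegaM m₂ (u:ℝ))) :=
    fun k => ⟨m₂ k, by rintro _ ⟨⟨u, hu⟩, rfl⟩; exact hm2bd k u hu⟩
  have hB_nonneg : ∀ k, 0 ≤ lcMinorant m₂ k := by
    intro k; rw [lcMinorant]
    exact Real.iSup_nonneg fun u =>
      div_nonneg (pow_nonneg (Set.mem_Ioi.mp u.2).le k) (Real.exp_pos _).le
  have hA_nonneg : ∀ k, 0 ≤ lcMinorant m₁ k := by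
    intro k; rw [lcMinorant]
    exact Real.iSup_nonneg fun u =>
      div_nonneg (pow_nonneg (Set.mem_Ioi.mp u.2).le k) (Real.exp_pos _).le
  -- \underline{m₁}_{2k} ≤ (\underline{m₂}_k)^2
  have hAB : ∀ k : ℕ, lcMinorant m₁ (2*k) ≤ lcMinorant m₂ k ^ 2 := by
    intro k
    rw [lcMinorant]
    apply ciSup_le
    rintro ⟨s, hs⟩
    have hs' : (0:ℝ) < s := Set.mem_Ioi.mp hs
    dsimp only
    have hexp2 : (Real.exp (omegaM m₂ s))^2 = Real.exp (2 * omegaM m₂ s) := by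
      rw [← Real.exp_nat_mul]; norm_num
    have hstep : (s:ℝ)^(2*k) / Real.exp (omegaM m₁ s)
        ≤ ((s:ℝ)^k / Real.exp (omegaM m₂ s))^2 := by
      rw [div_pow, hexp2, show s^(2*k) = (s^k)^2 by rw [← pow_mul, mul_comm k 2]]
      exact div_le_div_of_nonneg_left (pow_nonneg (pow_nonneg hs'.le k) 2)
        (Real.exp_pos _) (Real.exp_le_exp.mpr (homega s hs'))
    have hle : (s:ℝ)^k / Real.exp (omegaM m₂ s) ≤ lcMinorant m₂ k := by
      rw [lcMinorant]
      exact le_ciSup (hBdd2' k) ⟨s, hs⟩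
    calc (s:ℝ)^(2*k) / Real.exp (omegaM m₁ s) ≤ _ := hstep
    _ ≤ lcMinorant m₂ k ^ 2 := pow_le_pow_left₀ (by positivity) hle 2
  have hmain : ∀ k : ℕ, hFun (lcMinorant m₁) t ≤ (lcMinorant m₂ k * t^k)^2 := by
    intro k
    have hbb : BddBelow (Set.range fun i : ℕ => lcMinorant m₁ i * t^i) := by
      refine ⟨0, ?_⟩
      rintro _ ⟨i, rfl⟩
      exact mul_nonneg (hA_nonneg i) (by positivity)
    have h1 : hFun (lcMinorant m₁) t ≤ lcMinorant m₁ (2*k) * t^(2*k) := by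
      rw [hFun]; exact ciInf_le hbb (2*k)
    calc hFun (lcMinorant m₁) t ≤ lcMinorant m₁ (2*k) * t^(2*k) := h1
    _ ≤ lcMinorant m₂ k ^2 * t^(2*k) :=
        mul_le_mul_of_nonneg_right (hAB k) (by positivity)
    _ = (lcMinorant m₂ k * t^k)^2 := by rw [mul_pow, ← pow_mul, mul_comm k 2]
  have h0 : 0 ≤ hFun (lcMinorant m₁) t := by
    rw [hFun]
    exact Real.iInf_nonneg fun k => mul_nonneg (hA_nonneg k) (by positivity)
  have hsq : Real.sqrt (hFun (lcMinorant m₁) t) ≤ hFun (lcMinorant m₂) t := by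
    rw [hFun]
    apply le_ciInf
    intro k
    have h := Real.sqrt_le_sqrt (hmain k)
    rwa [Real.sqrt_sq (mul_nonneg (hB_nonneg k) (by positivity))] at h
  calc hFun (lcMinorant m₁) t = Real.sqrt (hFun (lcMinorant m₁) t) ^ 2 := (Real.sq_sqrt h0).symm
  _ ≤ hFun (lcMinorant m₂) t ^ 2 := pow_le_pow_left₀ (Real.sqrt_nonneg _) hsq 2
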